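/- Let ‖·‖ be a norm on ℝ^p with polytope unit ball B = conv(V₁,…,V_k). Let F = {s ∈ B* : V_l's = 1 for all l ∈ I} be a face of the dual ball B*, with I ⊆ [k] maximal for this representation. If F is contained in the subdifferential of ‖·‖ at b, then b lies in the column span of {V_l : l ∈ I}. -/

import Mathlib

open Finset Matrix

noncomputable def dot {p : ℕ} (x y : Fin p → ℝ) : ℝ := ∑ i, x i * y i

structure IsNorm {p : ℕ} (N : (Fin p → ℝ) → ℝ) : Prop where
  nonneg : ∀ x, 0 ≤ N x
  eq_zero_iff : ∀ x, N x = 0 ↔ x = 0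
  smul : ∀ (c : ℝ) (x), N (c • x) = |c| * N x
  triangle : ∀ x y, N (x + y) ≤ N x + N y

noncomputable def dualNorm {p : ℕ} (N : (Fin p → ℝ) → ℝ) (x : Fin p → ℝ) : ℝ :=
  sSup {r | ∃ s, N s ≤ 1 ∧ r = dot s x}

def subdiff {p : ℕ} (N : (Fin p → ℝ) → ℝ) (x : Fin p → ℝ) : Set (Fin p → ℝ) :=
  {s | ∀ z, N x + dot s (z - x) ≤ N z}

def IsFace {p : ℕ} (P F : Set (Fin p → ℝ)) : Prop :=
  ∃ (a : Fin p → ℝ) (b₀ : ℝ), (∀ x ∈ P, dot a x ≤ b₀) ∧ F = {x ∈ P | dot a x = b₀}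

section Aux
variable {p : ℕ}

lemma dot_comm (x y : Fin p → ℝ) : dot x y = dot y x :=
  Finset.sum_congr rfl fun i _ => mul_comm _ _

lemma dot_add_left (x y z : Fin p → ℝ) : dot (x + y) z = dot x z + dot y z := by
  unfold dot; simp [add_mul, Finset.sum_add_distrib]

lemma dot_smul_left (c : ℝ) (x z : Fin p → ℝ) : dot (c • x) z = c * dot x z := by
  unfold dot; simp [Finset.mul_sum, mul_assoc]

lemma dot_add_right (x y z : Fin p → ℝ) : dot x (y + z) = dot x y + dot x z := by
  rw [dot_comm, dot_add_left, dot_comm y x, dot_comm z x]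

lemma dot_smul_right (c : ℝ) (x z : Fin p → ℝ) : dot x (c • z) = c * dot x z := by
  rw [dot_comm, dot_smul_left, dot_comm z x]

lemma dot_sum_right {α : Type*} (s : Finset α) (x : Fin p → ℝ) (f : α → (Fin p → ℝ)) :
    dot x (∑ l ∈ s, f l) = ∑ l ∈ s, dot x (f l) := by
  classical
  induction s using Finset.induction with
  | empty => simp [dot]
  | insert _ _ h ih => rw [Finset.sum_insert h, dot_add_right, ih, Finset.sum_insert h]

lemma isLinearMap_dot (z : Fin p → ℝ) : IsLinearMap ℝ (fun x : Fin p → ℝ => dot x z) :=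
  ⟨fun a b => dot_add_left a b z, fun c a => dot_smul_left c a z⟩

lemma hull_le {k : ℕ} {V : Fin k → (Fin p → ℝ)} {s : Fin p → ℝ} {M : ℝ}
    (h : ∀ l, dot (V l) s ≤ M) {x : Fin p → ℝ} (hx : x ∈ convexHull ℝ (Set.range V)) :
    dot x s ≤ M :=
  convexHull_min (by rintro _ ⟨l, rfl⟩; exact h l)
    (convex_halfSpace_le (isLinearMap_dot s) M) hx

lemma neg_dot (x y : Fin p → ℝ) : dot x (-y) = -dot x y := by
  unfold dot; simp [mul_neg]

end Aux

theorem face_subset_subdiff_mem_span {p k : ℕ} (N : (Fin p → ℝ) → ℝ) (hN : IsNorm N)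
    (V : Fin k → (Fin p → ℝ))
    (hB : {x | N x ≤ 1} = convexHull ℝ (Set.range V))
    (I : Finset (Fin k)) (F : Set (Fin p → ℝ))
    (hFdef : F = {s | dualNorm N s ≤ 1 ∧ ∀ l ∈ I, dot (V l) s = 1})
    (hface : IsFace {s | dualNorm N s ≤ 1} F)
    (hmax : ∀ l : Fin k, (∀ s ∈ F, dot (V l) s = 1) → l ∈ I)
    (b : Fin p → ℝ) (hsub : F ⊆ subdiff N b) :
    b ∈ Submodule.span ℝ (V '' (I : Set (Fin k))) := by
  classical
  -- membership in the ball via hull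
  have hball : ∀ x, N x ≤ 1 ↔ x ∈ convexHull ℝ (Set.range V) := fun x =>
    Set.ext_iff.mp hB x
  -- dual norm characterization
  have hVball : ∀ l, N (V l) ≤ 1 := fun l =>
    (hball (V l)).mpr (subset_convexHull ℝ _ ⟨l, rfl⟩)
  have hdual : ∀ s, dualNorm N s ≤ 1 ↔ ∀ l, dot (V l) s ≤ 1 := by
    intro s
    constructor
    · intro h l
      have hbdd : BddAbove {r | ∃ s', N s' ≤ 1 ∧ r = dot s' s} := by
        refine ⟨∑ j, |dot (V j) s|, ?_⟩
        rintro r ⟨s', hs', rfl⟩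
        refine hull_le (fun j => le_trans (le_abs_self _) ?_) ((hball s').mp hs')
        exact Finset.single_le_sum (f := fun j' => |dot (V j') s|)
          (fun i _ => abs_nonneg _) (Finset.mem_univ j)
      exact le_trans (le_csSup hbdd ⟨V l, hVball l, rfl⟩) h
    · intro h
      refine Real.sSup_le ?_ zero_le_one
      rintro r ⟨s', hs', rfl⟩
      exact hull_le h ((hball s').mp hs')
  -- subdifferential members pair to N b with b
  have hdotb : ∀ s ∈ F, dot s b = N b := by
    intro s hs
    have h := hsub hs
    have hN0 : N 0 = 0 := (hN.eq_zero_iff 0).mpr rfl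
    have h0 : N b + dot s (0 - b) ≤ N 0 := h 0
    have h2 : N b + dot s (b + b - b) ≤ N (b + b) := h (b + b)
    have htri : N (b + b) ≤ N b + N b := hN.triangle b b
    have e1 : dot s (0 - b) = -dot s b := by rw [zero_sub, neg_dot]
    have e2 : b + b - b = b := by abel
    rw [e1, hN0] at h0
    rw [e2] at h2
    linarith
  by_cases hI : I = Finset.univ
  · subst hI
    rw [Finset.coe_univ, Set.image_univ]
    by_cases hb0 : b = 0
    · simp [hb0]
    · have hc : 0 < N b :=
        lt_of_le_of_ne (hN.nonneg b) (fun h => hb0 ((hN.eq_zero_iff b).mp h.symm))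
      have hmem : (N b)⁻¹ • b ∈ convexHull ℝ (Set.range V) := by
        rw [← hball, hN.smul, abs_of_pos (inv_pos.mpr hc), inv_mul_cancel₀ (ne_of_gt hc)]
      have hmem2 : (N b)⁻¹ • b ∈ Submodule.span ℝ (Set.range V) :=
        convexHull_min Submodule.subset_span (Submodule.span ℝ (Set.range V)).convex hmem
      have := Submodule.smul_mem _ (N b) hmem2
      rwa [smul_inv_smul₀ (ne_of_gt hc)] at this
  · -- F is nonempty
    have hFne : F.Nonempty := by
      by_contra h
      rw [Set.not_nonempty_iff_eq_empty] at h
      exact hI (Finset.eq_univ_iff_forall.mpr fun l => hmax l (by simp [h]))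
    obtain ⟨s₀, hs₀⟩ := hFne
    have hIc : (Iᶜ : Finset (Fin k)).Nonempty := by
      rw [Finset.nonempty_iff_ne_empty]
      intro h
      apply hI
      rwa [Finset.compl_eq_empty_iff] at h
    have hFmem : ∀ s ∈ F, dualNorm N s ≤ 1 ∧ ∀ l ∈ I, dot (V l) s = 1 := by
      intro s hs; rwa [hFdef] at hs
    -- witnesses with strict inequality
    have hw : ∀ l ∈ (Iᶜ : Finset (Fin k)), ∃ s, s ∈ F ∧ dot (V l) s < 1 := by
      intro l hl
      rw [Finset.mem_compl] at hl
      have h1 : ¬ ∀ s ∈ F, dot (V l) s = 1 := fun hc => hl (hmax l hc)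
      push_neg at h1
      obtain ⟨s, hsF, hne⟩ := h1
      exact ⟨s, hsF, lt_of_le_of_ne ((hdual s).mp (hFmem s hsF).1 l) hne⟩
    choose! w hwF hwlt using hw
    set n := (Iᶜ : Finset (Fin k)).card with hn
    set c : ℝ := (1 : ℝ) / (n + 1) with hcdef
    have hc0 : 0 < c := by positivity
    set sb : Fin p → ℝ := c • (s₀ + ∑ l ∈ Iᶜ, w l) with hsbdef
    have hdotsb : ∀ m, dot (V m) sb =
        c * (dot (V m) s₀ + ∑ l ∈ Iᶜ, dot (V m) (w l)) := by
      intro m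
      rw [hsbdef, dot_smul_right, dot_add_right, dot_sum_right]
    have hcmul : c * (1 + (n : ℝ)) = 1 := by
      rw [hcdef]; field_simp; ring
    have hsbI : ∀ m ∈ I, dot (V m) sb = 1 := by
      intro m hm
      rw [hdotsb, (hFmem s₀ hs₀).2 m hm]
      rw [Finset.sum_congr rfl (fun l hl => (hFmem (w l) (hwF l hl)).2 m hm)]
      simp [hcmul]
      exact hcmul
    have hsble : ∀ m, dot (V m) sb ≤ 1 := by
      intro m
      rw [hdotsb]
      have h1 : dot (V m) s₀ ≤ 1 := (hdual s₀).mp (hFmem s₀ hs₀).1 m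
      have h2 : ∑ l ∈ Iᶜ, dot (V m) (w l) ≤ ∑ l ∈ (Iᶜ : Finset (Fin k)), (1 : ℝ) :=
        Finset.sum_le_sum fun l hl => (hdual (w l)).mp (hFmem (w l) (hwF l hl)).1 m
      rw [Finset.sum_const, nsmul_eq_mul, mul_one] at h2
      calc c * (dot (V m) s₀ + ∑ l ∈ Iᶜ, dot (V m) (w l))
          ≤ c * (1 + (n : ℝ)) := by
            apply mul_le_mul_of_nonneg_left _ hc0.le
            linarith
        _ = 1 := hcmul
    have hsblt : ∀ m ∈ (Iᶜ : Finset (Fin k)), dot (V m) sb < 1 := by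
      intro m hm
      rw [hdotsb]
      have h1 : dot (V m) s₀ ≤ 1 := (hdual s₀).mp (hFmem s₀ hs₀).1 m
      have h2 : ∑ l ∈ Iᶜ, dot (V m) (w l) < ∑ l ∈ (Iᶜ : Finset (Fin k)), (1 : ℝ) := by
        refine Finset.sum_lt_sum
          (fun l hl => (hdual (w l)).mp (hFmem (w l) (hwF l hl)).1 m) ⟨m, hm, hwlt m hm⟩
      rw [Finset.sum_const, nsmul_eq_mul, mul_one] at h2
      calc c * (dot (V m) s₀ + ∑ l ∈ Iᶜ, dot (V m) (w l))
          < c * (1 + (n : ℝ)) := by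
            apply mul_lt_mul_of_pos_left _ hc0
            linarith
        _ = 1 := hcmul
    have hsbF : sb ∈ F := by
      rw [hFdef]
      exact ⟨(hdual sb).mpr hsble, hsbI⟩
    -- the separating functional
    by_contra hbW
    have hq : (Submodule.span ℝ (V '' (I : Set (Fin k)))).mkQ b ≠ 0 := by
      simpa [Submodule.Quotient.mk_eq_zero] using hbW
    obtain ⟨φ, hφ⟩ : ∃ φ : Module.Dual ℝ
        ((Fin p → ℝ) ⧸ Submodule.span ℝ (V '' (I : Set (Fin k)))),
        φ ((Submodule.span ℝ (V '' (I : Set (Fin k)))).mkQ b) ≠ 0 := by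
      by_contra h
      push_neg at h
      exact hq ((Module.forall_dual_apply_eq_zero_iff ℝ _).mp h)
    set f : (Fin p → ℝ) →ₗ[ℝ] ℝ :=
      φ.comp (Submodule.span ℝ (V '' (I : Set (Fin k)))).mkQ with hfdef
    have hfb : f b ≠ 0 := hφ
    have hfW : ∀ x ∈ Submodule.span ℝ (V '' (I : Set (Fin k))), f x = 0 := by
      intro x hx
      simp [hfdef, (Submodule.Quotient.mk_eq_zero _).mpr hx]
    set u : Fin p → ℝ := fun i => f (Pi.single i 1) with hudef
    have hdotu : ∀ x, dot x u = f x := by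
      intro x
      have hx : x = ∑ i, x i • (Pi.single i 1 : Fin p → ℝ) := by
        funext j
        simp [Finset.sum_apply, Pi.single_apply]
      have hfx : f x = ∑ i, x i * f (Pi.single i (1:ℝ) : Fin p → ℝ) := by
        conv_lhs => rw [hx]
        rw [map_sum]
        simp
      rw [hfx]
      simp [dot, hudef]
    have hfV : ∀ m ∈ I, dot (V m) u = 0 := fun m hm => by
      rw [hdotu]; exact hfW _ (Submodule.subset_span ⟨m, hm, rfl⟩)
    have hub : dot u b ≠ 0 := by
      rw [dot_comm, hdotu]; exact hfb
    -- the perturbation size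
    set ε : ℝ := (Iᶜ : Finset (Fin k)).inf' hIc
      (fun m => (1 - dot (V m) sb) / (|dot (V m) u| + 1)) with hεdef
    have hε0 : 0 < ε := by
      rw [hεdef, Finset.lt_inf'_iff]
      intro m hm
      have := hsblt m hm
      apply div_pos (by linarith) (by positivity)
    set s' : Fin p → ℝ := sb + ε • u with hs'def
    have hs'dot : ∀ m, dot (V m) s' = dot (V m) sb + ε * dot (V m) u := by
      intro m; rw [hs'def, dot_add_right, dot_smul_right ε]
    have hs'F : s' ∈ F := by
      rw [hFdef]
      constructor
      · refine (hdual s').mpr fun m => ?_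
        rw [hs'dot]
        by_cases hm : m ∈ I
        · rw [hsbI m hm, hfV m hm]; simp
        · have hmIc : m ∈ (Iᶜ : Finset (Fin k)) := Finset.mem_compl.mpr hm
          have h1 : ε ≤ (1 - dot (V m) sb) / (|dot (V m) u| + 1) :=
            Finset.inf'_le _ hmIc
          have hq0 : (0 : ℝ) < |dot (V m) u| + 1 := by positivity
          have h2 : ε * (|dot (V m) u| + 1) ≤ 1 - dot (V m) sb :=
            (le_div_iff₀ hq0).mp h1
          have h3 : ε * dot (V m) u ≤ ε * |dot (V m) u| :=
            mul_le_mul_of_nonneg_left (le_abs_self _) hε0.le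
          nlinarith
      · intro m hm
        rw [hs'dot, hsbI m hm, hfV m hm]
        ring
    -- contradiction
    have e1 : dot s' b = N b := hdotb s' hs'F
    have e2 : dot sb b = N b := hdotb sb hsbF
    have e3 : dot s' b = dot sb b + ε * dot u b := by
      rw [hs'def, dot_add_left, dot_smul_left ε]
    have : ε * dot u b = 0 := by linarith
    exact hub (by
      rcases mul_eq_zero.mp this with h | h
      · exact absurd h (ne_of_gt hε0)
      · exact h)
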